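/- arXiv:math/0511436 — 2 statements merged into one kernel-verified Lean document; each statement's English description precedes it below -/
import Mathlib

section
/- In the algebra with generators x_1, x_0, x_{-1} and relations (1-q^2)x_0^2 + q x_{-1}x_1 - q x_1 x_{-1} = ξ x_0, x_{-1}x_0 - q^2 x_0 x_{-1} = ξ x_{-1}, x_0 x_1 - q^2 x_1 x_0 = ξ x_1, the two ways of reordering the monomial x_0 x_1 x_{-1} to x_{-1} x_1 x_0 (via x_1 x_0 x_{-1} → x_1 x_{-1} x_0 versus via x_0 x_{-1} x_1 → x_{-1} x_0 x_1) yield the same expression; i.e., the rewriting system given by the relations is consistent on this cubic overlap. -/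
/-- Diamond consistency for the Podleś relations on the cubic overlap
`x₀x₁x₋₁`: both reduction paths to `x₋₁x₁x₀` yield the same normal-ordered
expression, namely `x₋₁x₁x₀ + (1-q²)q⁻¹ x₀³ - q⁻¹ξ x₀²`; in particular the
two paths `x₀x₁x₋₁ → x₁x₀x₋₁ → x₁x₋₁x₀` and
`x₀x₁x₋₁ → x₀x₋₁x₁ → x₋₁x₀x₁` agree. -/
theorem podles_cubic_diamond_consistent
    {k : Type*} [Field k] {A : Type*} [Ring A] [Algebra k A]
    (q ξ : k) (hq : q ≠ 0) (x1 x0 xm : A)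
    (h1 : xm * x1 = x1 * xm - ((1 - q ^ 2) * q⁻¹) • (x0 * x0) + (q⁻¹ * ξ) • x0)
    (h2 : xm * x0 = q ^ 2 • (x0 * xm) + ξ • xm)
    (h3 : x0 * x1 = q ^ 2 • (x1 * x0) + ξ • x1) :
    -- path via x₁x₀x₋₁ then x₁x₋₁x₀
    x0 * x1 * xm = x1 * (xm * x0) ∧
    -- path via x₀x₋₁x₁ then x₋₁x₀x₁
    x0 * x1 * xm
      = x0 * (xm * x1) + ((1 - q ^ 2) * q⁻¹) • (x0 ^ 3) - (q⁻¹ * ξ) • (x0 ^ 2) ∧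
    -- the common fully reordered result of both paths
    x0 * x1 * xm
      = xm * (x1 * x0) + ((1 - q ^ 2) * q⁻¹) • (x0 ^ 3) - (q⁻¹ * ξ) • (x0 ^ 2) := by
  have c1 : x0 * x1 * xm = x1 * (xm * x0) := by
    rw [h3, h2]
    simp [mul_add, add_mul, smul_mul_assoc, mul_smul_comm, mul_assoc]
  refine ⟨c1, ?_, ?_⟩
  · rw [h1]
    simp [mul_add, mul_sub, smul_mul_assoc, mul_smul_comm, pow_succ, pow_two, mul_assoc]
    abel
  · have : xm * (x1 * x0)
        = x1 * (xm * x0) - ((1 - q ^ 2) * q⁻¹) • (x0 ^ 3) + (q⁻¹ * ξ) • (x0 ^ 2) := by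
      rw [← mul_assoc, h1]
      simp [add_mul, sub_mul, smul_mul_assoc, pow_succ, pow_two, mul_assoc]
    rw [this, c1]
    abel
end

section
/- In the quantum superspace algebra with relations z_1 z_0 = q z_0 z_1, z_0 z_{-1} = q z_{-1} z_0, z_1 z_{-1} = q^2 z_{-1} z_1 - q(q^{-1/2}+q^{1/2})r, z_0^2 = -q^{-1}[2] z_1 z_{-1} - q^{-1}r, the two reduction paths of the cubic monomial z_1 z_0 z_{-1} (first reordering z_1 z_0 then z_1 z_{-1} and z_0 z_{-1}, versus first reordering z_0 z_{-1} then z_1 z_{-1} and z_1 z_0) give the same normal-ordered result; i.e., the defining relations are consistent (no hidden relations arise from the diamond z_1 z_0 z_{-1}). -/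
/-- Diamond consistency of the quantum superspace relations on the cubic
monomial `z₁z₀z₋₁`: both reduction paths (first reordering `z₁z₀`, versus
first reordering `z₀z₋₁`) lead to the same normal-ordered result
`q⁴ z₋₁z₀z₁ - q²(q^{-1/2}+q^{1/2}) r z₀`.  Here `s` denotes `q^{1/2}`. -/
theorem quantum_superspace_cubic_diamond_consistent
    {k : Type*} [Field k] {A : Type*} [Ring A] [Algebra k A]
    (q s r : k) (hq : q ≠ 0) (hs : s ≠ 0) (hsq : s ^ 2 = q)
    (z1 z0 zm : A)
    (h1 : z1 * z0 = q • (z0 * z1))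
    (h2 : z0 * zm = q • (zm * z0))
    (h3 : z1 * zm = q ^ 2 • (zm * z1) - (q * (s⁻¹ + s) * r) • (1 : A))
    (h4 : z0 * z0 = -(q⁻¹ * ((q⁻¹ + q) / (s⁻¹ + s))) • (z1 * zm)
            - (q⁻¹ * r) • (1 : A)) :
    -- first step of path 1 (reorder z₁z₀) and of path 2 (reorder z₀z₋₁)
    z1 * z0 * zm = q • (z0 * z1 * zm) ∧
    z1 * z0 * zm = q • (z1 * (zm * z0)) ∧
    -- the common normal-ordered result of both reduction paths
    z1 * z0 * zm
      = q ^ 4 • (zm * (z0 * z1)) - (q ^ 2 * (s⁻¹ + s) * r) • z0 := by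
  refine ⟨by rw [h1, smul_mul_assoc], by rw [mul_assoc, h2, mul_smul_comm], ?_⟩
  rw [h1, smul_mul_assoc, mul_assoc, h3, mul_sub, mul_smul_comm, mul_smul_comm,
    mul_one, ← mul_assoc, h2, smul_mul_assoc, mul_assoc, smul_sub,
    smul_smul, smul_smul, smul_smul]
  ring_nf
end
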